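/- arXiv:2202.13929 — 4 statements merged into one kernel-verified Lean document; each statement's English description precedes it below -/
import Mathlib

section
/- The formal power series M(z) = (18z − 1 + (1−12z)^{3/2}) / (54z²) satisfies [zⁿ] M(z) = (2·3ⁿ / ((n+1)(n+2))) · C(2n, n) for all n ≥ 0. -/
open PowerSeries

/-- The generalized binomial coefficient `r(r−1)⋯(r−n+1)/n!`. -/
noncomputable def genBinom (r : ℚ) (n : ℕ) : ℚ :=
  (∏ i ∈ Finset.range n, (r - i)) / n.factorial

/-- The binomial series `(1 − 12z)^{3/2} = ∑ C(3/2, n) (−12)ⁿ zⁿ`. -/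
noncomputable def oneSub12ZPow32 : PowerSeries ℚ :=
  PowerSeries.mk fun n => genBinom (3/2) n * (-12) ^ n

/-!
Shifting by `z²`, the claim says that the coefficient of `z^{n+2}` in `(1 − 12z)^{3/2}` is
`54 · 2·3ⁿ/((n+1)(n+2)) · C(2n, n)`. Writing `−12 = 3 · (−4)`, this is the classical expansion
`[z^{n+2}] (1 − 4z)^{3/2} = 12 C(2n, n)/((n+1)(n+2))`, which follows by induction on `n` from the
ratio `C(3/2, n+3)/C(3/2, n+2) = −(2n+1)/(2(n+3))` of consecutive binomial coefficients and the ratio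
`(n+1) C(2n+2, n+1) = 2(2n+1) C(2n, n)` of consecutive central binomial coefficients.
-/

theorem genBinom_succ (r : ℚ) (n : ℕ) :
    genBinom r (n + 1) = genBinom r n * (r - n) / (n + 1) := by
  rw [genBinom, genBinom, Finset.prod_range_succ, Nat.factorial_succ]
  push_cast
  field_simp

theorem genBinom_three_halves_mul_neg_four_pow (n : ℕ) :
    genBinom (3/2) (n + 2) * (-4) ^ (n + 2) = 12 * n.centralBinom / ((n + 1) * (n + 2)) := by
  induction n with
  | zero => norm_num [genBinom, Finset.prod_range_succ, Nat.factorial]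
  | succ n ih =>
    have hcentral : ((n + 1).centralBinom : ℚ) = 2 * (2 * n + 1) * n.centralBinom / (n + 1) := by
      rw [eq_div_iff (by positivity), mul_comm]
      exact_mod_cast Nat.succ_mul_centralBinom_succ n
    calc genBinom (3/2) (n + 1 + 2) * (-4) ^ (n + 1 + 2)
        = genBinom (3/2) (n + 2) * (-4) ^ (n + 2) * (2 * (2 * n + 1) / (n + 3)) := by
          rw [show n + 1 + 2 = n + 2 + 1 by ring, genBinom_succ, pow_succ]
          push_cast
          field_simp
          ring
      _ = 12 * (n + 1).centralBinom / ((n + 1 + 1) * (n + 1 + 2)) := by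
          rw [ih, hcentral]
          field_simp
          ring
      _ = _ := by push_cast; ring

theorem coeff_oneSub12ZPow32_add_two (n : ℕ) :
    coeff (n + 2) oneSub12ZPow32 = 54 * (2 * 3 ^ n / ((n + 1) * (n + 2)) * n.centralBinom) := by
  rw [oneSub12ZPow32, coeff_mk, show (-12 : ℚ) = 3 * -4 by norm_num, mul_pow, mul_left_comm,
    genBinom_three_halves_mul_neg_four_pow]
  ring

/-- The formal power series
`M(z) = (18z − 1 + (1−12z)^{3/2}) / (54z²)`, i.e. the series `M` with
`54 z² M(z) = 18z − 1 + (1−12z)^{3/2}`, satisfies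
`[zⁿ] M(z) = 2·3ⁿ/((n+1)(n+2)) · C(2n, n)` for all `n ≥ 0`. -/
theorem coeff_map_series (M : PowerSeries ℚ)
    (hM : (PowerSeries.C (R := ℚ) 54) * PowerSeries.X ^ 2 * M
        = (PowerSeries.C (R := ℚ) 18) * PowerSeries.X - 1 + oneSub12ZPow32) :
    ∀ n : ℕ,
      PowerSeries.coeff (R := ℚ) n M
        = 2 * 3 ^ n / ((n + 1) * (n + 2)) * Nat.choose (2 * n) n := by
  intro n
  have h := congrArg (coeff (n + 2)) hM
  rw [mul_assoc, coeff_C_mul, coeff_X_pow_mul, map_add, coeff_oneSub12ZPow32_add_two] at h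
  simp only [map_sub, coeff_C_mul, coeff_X, coeff_one] at h
  rw [← Nat.centralBinom_eq_two_mul_choose]
  simpa using h
end

section
/- The coefficients M_n = (2·3ⁿ / ((n+1)(n+2))) · C(2n, n) satisfy the asymptotic estimate M_n ~ (2/√π) · n^{−5/2} · 12ⁿ as n → ∞, i.e., lim_{n→∞} M_n · n^{5/2} · 12^{−n} = 2/√π. -/
open Filter

/-! Since `C(2n, n) = (2n)! / (n!)²`, Stirling's formula `n! / (√(2n) (n/e)ⁿ) → √π` gives
`C(2n, n) · √n / 4ⁿ → 1/√π`. As `12ⁿ = 3ⁿ · 4ⁿ`, what is left of `Mₙ · n^{5/2} / 12ⁿ` is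
`2 · n/(n+1) · n/(n+2) → 2`. -/

open Real Stirling Nat

lemma centralBinom_mul_sqrt_div_four_pow_eq {n : ℕ} (hn : n ≠ 0) :
    (centralBinom n : ℝ) * √n / 4 ^ n = stirlingSeq (2 * n) / stirlingSeq n ^ 2 := by
  have hfact : ((2 * n)! : ℝ) = centralBinom n * n ! * n ! := by
    rw [centralBinom_eq_two_mul_choose]
    exact_mod_cast (choose_mul_factorial_mul_factorial (by omega : n ≤ 2 * n)).symm.trans
      (by rw [two_mul, Nat.add_sub_cancel])
  have hsqrt : √(2 * (2 * n : ℕ) : ℝ) = 2 * √n := by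
    push_cast
    rw [show (2 * (2 * n) : ℝ) = 2 ^ 2 * n by ring, sqrt_mul (by positivity),
      sqrt_sq zero_le_two]
  have hpow : ((2 * n : ℕ) / exp 1 : ℝ) ^ (2 * n) = 4 ^ n * ((n / exp 1) ^ n) ^ 2 := by
    push_cast
    rw [mul_div_assoc, mul_pow, pow_mul (2 : ℝ), pow_mul']
    norm_num
  simp only [stirlingSeq, hfact, hsqrt, hpow]
  rw [sqrt_mul zero_le_two]
  field_simp
  rw [sq_sqrt zero_le_two]

theorem tendsto_centralBinom_mul_sqrt_div_four_pow :
    Tendsto (fun n : ℕ => (centralBinom n : ℝ) * √n / 4 ^ n) atTop (nhds (√π)⁻¹) := by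
  have hπ : √π ≠ 0 := by positivity
  have h := (tendsto_stirlingSeq_sqrt_pi.comp (tendsto_id.const_mul_atTop' two_pos)).div
    (tendsto_stirlingSeq_sqrt_pi.pow 2) (pow_ne_zero 2 hπ)
  rw [sq, div_mul_cancel_left₀ hπ] at h
  refine h.congr' ?_
  filter_upwards [eventually_ne_atTop 0] with n hn
  exact (centralBinom_mul_sqrt_div_four_pow_eq hn).symm

/-- The numbers `Mₙ = 2·3ⁿ/((n+1)(n+2)) · C(2n,n)` of rooted
planar maps with `n` edges satisfy `Mₙ ~ (2/√π) · n^{−5/2} · 12ⁿ`, i.e.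
`Mₙ · n^{5/2} · 12^{−n} → 2/√π` as `n → ∞`. -/
theorem maps_asymptotics :
    Filter.Tendsto
      (fun n : ℕ =>
        (2 * 3 ^ n / ((n + 1) * (n + 2)) * Nat.choose (2 * n) n : ℝ)
          * (n : ℝ) ^ ((5 : ℝ) / 2) / 12 ^ n)
      Filter.atTop (nhds (2 / Real.sqrt Real.pi)) := by
  have h := (((tendsto_natCast_div_add_atTop (1 : ℝ)).mul
    (tendsto_natCast_div_add_atTop (2 : ℝ))).mul
      tendsto_centralBinom_mul_sqrt_div_four_pow).const_mul 2
  rw [one_mul, one_mul, ← div_eq_mul_inv] at h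
  refine h.congr fun n => ?_
  have hrpow : (n : ℝ) ^ ((5 : ℝ) / 2) = n ^ 2 * √n := by
    rw [show (5 : ℝ) / 2 = (2 : ℕ) + 1 / 2 by norm_num, rpow_add' n.cast_nonneg (by norm_num),
      rpow_natCast, ← sqrt_eq_rpow]
  rw [hrpow, show (12 : ℝ) ^ n = 3 ^ n * 4 ^ n by rw [← mul_pow]; norm_num,
    ← centralBinom_eq_two_mul_choose]
  field_simp
end

section
/- The polynomial 125z⁶ + 750z⁴ − 4332z² + 1000 is irreducible over ℚ and has a root σ in the interval (0.49, 0.492). -/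
open Polynomial

abbrev K := ZMod 31
instance : Fact (Nat.Prime 31) := ⟨by norm_num⟩



lemma Fb_monic : (X^6+6*X^4+8*X^2+8 : K[X]).Monic := by monicity!
lemma Fb_deg : (X^6+6*X^4+8*X^2+8 : K[X]).natDegree = 6 := by compute_degree!

lemma monic_two {R : Type*} [Semiring R] (g : R[X]) (h : g.Monic) (hd : g.natDegree = 2) :
    g = X^2 + C (g.coeff 1) * X + C (g.coeff 0) := by
  ext n
  have h2 : g.coeff 2 = 1 := by simpa [hd] using h.coeff_natDegree
  match n with
  | 0 => simp
  | 1 => simp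
  | 2 => simp [h2, coeff_X_pow]
  | (m+3) =>
    rw [coeff_eq_zero_of_natDegree_lt (by omega)]
    simp only [coeff_add, coeff_X_pow, coeff_C, coeff_C_mul, coeff_X]
    split_ifs <;> first | rfl | omega | simp_all

lemma monic_three {R : Type*} [Semiring R] (g : R[X]) (h : g.Monic) (hd : g.natDegree = 3) :
    g = X^3 + C (g.coeff 2) * X^2 + C (g.coeff 1) * X + C (g.coeff 0) := by
  ext n
  have h3 : g.coeff 3 = 1 := by simpa [hd] using h.coeff_natDegree
  match n with
  | 0 => simp
  | 1 => simp [coeff_X_pow]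
  | 2 => simp [coeff_X_pow]
  | 3 => simp [h3, coeff_X_pow]
  | (m+4) =>
    rw [coeff_eq_zero_of_natDegree_lt (by omega)]
    simp only [coeff_add, coeff_X_pow, coeff_C, coeff_C_mul, coeff_X]
    split_ifs <;> first | rfl | omega | simp_all



set_option maxHeartbeats 4000000 in
lemma no_root : ∀ t : K, t^6+6*t^4+8*t^2+8 ≠ 0 := by decide

set_option maxHeartbeats 4000000 in
lemma no_quad : ∀ a b : K, -8*a+12*a*b-3*a*b^2-6*a^3+4*a^3*b-a^5 = 0 →
    8-8*b+6*b^2-b^3-6*a^2*b+3*a^2*b^2-a^4*b = 0 → False := by decide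

set_option maxHeartbeats 16000000 in
lemma no_cub : ∀ a b c : K, 8-6*b+b^2+2*a*c+6*a^2-3*a^2*b+a^4 = 0 →
    -6*c+2*b*c+6*a*b-2*a*b^2-a^2*c+a^3*b = 0 →
    8+c^2+6*a*c-2*a*b*c+a^3*c = 0 → False := by decide

lemma divid2 (a b : K) : (X^6+6*X^4+8*X^2+8 : K[X]) =
    (X^2 + C a * X + C b) *
      (X^4 - C a*X^3 + C (6-b+a^2)*X^2 + C (-6*a+2*a*b-a^3)*X
        + C (8-6*b+b^2+6*a^2-3*a^2*b+a^4))
    + (C (-8*a+12*a*b-3*a*b^2-6*a^3+4*a^3*b-a^5) * X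
        + C (8-8*b+6*b^2-b^3-6*a^2*b+3*a^2*b^2-a^4*b)) := by
  simp only [map_add, map_sub, map_mul, map_pow, map_ofNat, map_neg, map_one]
  ring

lemma divid3 (a b c : K) : (X^6+6*X^4+8*X^2+8 : K[X]) =
    (X^3 + C a*X^2 + C b*X + C c) *
      (X^3 - C a*X^2 + C (6-b+a^2)*X + C (-c-6*a+2*a*b-a^3))
    + (C (8-6*b+b^2+2*a*c+6*a^2-3*a^2*b+a^4)*X^2
        + C (-6*c+2*b*c+6*a*b-2*a*b^2-a^2*c+a^3*b)*X
        + C (8+c^2+6*a*c-2*a*b*c+a^3*c)) := by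
  simp only [map_add, map_sub, map_mul, map_pow, map_ofNat, map_neg, map_one]
  ring
lemma unit_of_deg0 (r : K[X]) (h0 : r ≠ 0) (hd : r.natDegree = 0) : IsUnit r := by
  have hc : r.coeff 0 ≠ 0 := fun hc => h0 (by
    rw [eq_C_of_natDegree_eq_zero hd, hc, map_zero])
  rw [eq_C_of_natDegree_eq_zero hd]
  exact isUnit_C.mpr (isUnit_iff_ne_zero.mpr hc)

lemma key : ∀ r : K[X], r ≠ 0 → r ∣ (X^6+6*X^4+8*X^2+8 : K[X]) →
    1 ≤ r.natDegree → r.natDegree ≤ 3 → False := by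
  intro r hr0 hrdvd h1 h3
  set g : K[X] := r * C r.leadingCoeff⁻¹ with hgdef
  have hgmonic : g.Monic := monic_mul_leadingCoeff_inv hr0
  have hg0 : g ≠ 0 := hgmonic.ne_zero
  have hgdeg : g.natDegree = r.natDegree := natDegree_mul_leadingCoeff_inv r hr0
  have hudvd : IsUnit (C r.leadingCoeff⁻¹) :=
    isUnit_C.mpr (isUnit_iff_ne_zero.mpr (inv_ne_zero (leadingCoeff_ne_zero.mpr hr0)))
  have hgdvd : g ∣ (X^6+6*X^4+8*X^2+8 : K[X]) := (hudvd.mul_right_dvd).mpr hrdvd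
  have hcase : g.natDegree = 1 ∨ g.natDegree = 2 ∨ g.natDegree = 3 := by omega
  obtain ⟨s, hs⟩ := hgdvd
  rcases hcase with hd | hd | hd
  · -- degree 1
    have hform := hgmonic.eq_X_add_C hd
    have hdvd' : (X - C (-(g.coeff 0))) ∣ (X^6+6*X^4+8*X^2+8 : K[X]) := by
      rw [map_neg, sub_neg_eq_add, ← hform]
      exact ⟨s, hs⟩
    have ht := dvd_iff_isRoot.mp hdvd'
    simp only [IsRoot, eval_add, eval_mul, eval_pow, eval_ofNat, eval_X] at ht
    exact no_root _ ht
  · -- degree 2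
    have hform := monic_two g hgmonic hd
    set a := g.coeff 1
    set b := g.coeff 0
    have hR : C (-8*a+12*a*b-3*a*b^2-6*a^3+4*a^3*b-a^5) * X
        + C (8-8*b+6*b^2-b^3-6*a^2*b+3*a^2*b^2-a^4*b)
        = g * (s - (X^4 - C a*X^3 + C (6-b+a^2)*X^2 + C (-6*a+2*a*b-a^3)*X
        + C (8-6*b+b^2+6*a^2-3*a^2*b+a^4))) := by
      rw [hform] at hs
      rw [hform]
      linear_combination hs - divid2 a b
    have hgR := Dvd.intro _ hR.symm
    have hdeg' : (1 : WithBot ℕ) < g.degree := by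
      rw [degree_eq_natDegree hg0, hd]
      exact_mod_cast one_lt_two
    have hz := eq_zero_of_dvd_of_degree_lt hgR (lt_of_le_of_lt degree_linear_le hdeg')
    have h1' := congrArg (fun p : K[X] => p.coeff 1) hz
    have h0' := congrArg (fun p : K[X] => p.coeff 0) hz
    simp only [coeff_add, coeff_C_mul, coeff_X, coeff_C, coeff_zero] at h1' h0'
    norm_num at h1' h0'
    exact no_quad a b (by linear_combination h1') (by linear_combination h0')
  · -- degree 3
    have hform := monic_three g hgmonic hd
    set a := g.coeff 2
    set b := g.coeff 1
    set c := g.coeff 0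
    have hR : C (8-6*b+b^2+2*a*c+6*a^2-3*a^2*b+a^4)*X^2
        + C (-6*c+2*b*c+6*a*b-2*a*b^2-a^2*c+a^3*b)*X
        + C (8+c^2+6*a*c-2*a*b*c+a^3*c)
        = g * (s - (X^3 - C a*X^2 + C (6-b+a^2)*X + C (-c-6*a+2*a*b-a^3))) := by
      rw [hform] at hs
      rw [hform]
      linear_combination hs - divid3 a b c
    have hgR := Dvd.intro _ hR.symm
    have hdeg' : (2 : WithBot ℕ) < g.degree := by
      rw [degree_eq_natDegree hg0, hd]
      norm_num
    have hz := eq_zero_of_dvd_of_degree_lt hgR (lt_of_le_of_lt degree_quadratic_le hdeg')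
    have h2' := congrArg (fun p : K[X] => p.coeff 2) hz
    have h1' := congrArg (fun p : K[X] => p.coeff 1) hz
    have h0' := congrArg (fun p : K[X] => p.coeff 0) hz
    simp only [coeff_add, coeff_C_mul, coeff_X, coeff_C, coeff_X_pow, coeff_zero] at h2' h1' h0'
    norm_num at h2' h1' h0'
    exact no_cub a b c (by linear_combination h2') (by linear_combination h1') (by linear_combination h0')

lemma Fb_irred : Irreducible (X^6+6*X^4+8*X^2+8 : K[X]) := by
  by_contra hirr
  rw [irreducible_iff] at hirr
  push_neg at hirr
  have hu : ¬ IsUnit (X^6+6*X^4+8*X^2+8 : K[X]) := by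
    intro h
    have := natDegree_eq_zero_of_isUnit h
    rw [Fb_deg] at this
    omega
  obtain ⟨p, q, hpq, hp, hq⟩ := hirr hu
  have hF0 : (X^6+6*X^4+8*X^2+8 : K[X]) ≠ 0 := Fb_monic.ne_zero
  have hp0 : p ≠ 0 := by rintro rfl; rw [zero_mul] at hpq; exact hF0 hpq
  have hq0 : q ≠ 0 := by rintro rfl; rw [mul_zero] at hpq; exact hF0 hpq
  have hdeg : p.natDegree + q.natDegree = 6 := by
    rw [← natDegree_mul hp0 hq0, ← hpq, Fb_deg]
  have hp1 : 1 ≤ p.natDegree := by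
    by_contra h
    exact hp (unit_of_deg0 p hp0 (by omega))
  have hq1 : 1 ≤ q.natDegree := by
    by_contra h
    exact hq (unit_of_deg0 q hq0 (by omega))
  rcases le_or_gt p.natDegree 3 with h | h
  · exact key p hp0 ⟨q, hpq⟩ hp1 h
  · exact key q hq0 ⟨p, by rw [hpq]; ring⟩ hq1 (by omega)
noncomputable def fZ : ℤ[X] := C 125 * X^6 + C 750 * X^4 - C 4332 * X^2 + C 1000

lemma fZ_deg : fZ.natDegree = 6 := by unfold fZ; compute_degree!

lemma fZ_map_K : fZ.map (Int.castRingHom K) = X^6+6*X^4+8*X^2+8 := by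
  unfold fZ
  simp only [Polynomial.map_add, Polynomial.map_sub, Polynomial.map_mul, Polynomial.map_pow,
    map_C, map_X]
  have e125 : ((125:ℤ):K) = 1 := by decide
  have e750 : ((750:ℤ):K) = 6 := by decide
  have e4332 : ((4332:ℤ):K) = -8 := by decide
  have e1000 : ((1000:ℤ):K) = 8 := by decide
  rw [eq_intCast (Int.castRingHom K), eq_intCast (Int.castRingHom K),
    eq_intCast (Int.castRingHom K), eq_intCast (Int.castRingHom K), e125, e750, e4332, e1000]
  simp only [map_one, map_neg, map_ofNat]
  ring

lemma fZ_coeff6 : fZ.coeff 6 = 125 := by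
  unfold fZ
  simp [coeff_add, coeff_sub, coeff_C_mul, coeff_X_pow, coeff_C]

lemma fZ_coeff2 : fZ.coeff 2 = -4332 := by
  unfold fZ
  simp [coeff_add, coeff_sub, coeff_C_mul, coeff_X_pow, coeff_C]

lemma fZ_prim : fZ.IsPrimitive := by
  intro k hk
  rw [C_dvd_iff_dvd_coeff] at hk
  have h6 := hk 6
  have h2 := hk 2
  rw [fZ_coeff6] at h6
  rw [fZ_coeff2] at h2
  apply isUnit_of_dvd_one
  have : (1:ℤ) = 1109 * 125 + 32 * (-4332) := by norm_num
  rw [this]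
  exact dvd_add (h6.mul_left 1109) (h2.mul_left 32)

lemma fZ_ne : fZ ≠ 0 := fun h => by simpa [h] using fZ_coeff6

lemma fZ_lead : fZ.leadingCoeff = 125 := by
  rw [leadingCoeff, fZ_deg, fZ_coeff6]

lemma fZ_irred : Irreducible fZ := by
  constructor
  · intro h
    have := natDegree_eq_zero_of_isUnit h
    rw [fZ_deg] at this; omega
  · intro p q hpq
    have hp0 : p ≠ 0 := fun h => fZ_ne (by rw [hpq, h, zero_mul])
    have hq0 : q ≠ 0 := fun h => fZ_ne (by rw [hpq, h, mul_zero])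
    have hlead : p.leadingCoeff * q.leadingCoeff = 125 := by
      rw [← leadingCoeff_mul, ← hpq, fZ_lead]
    have hnz : ∀ r : ℤ, r ∣ 125 → ((r:ℤ):K) ≠ 0 := by
      intro r hr h0
      rw [ZMod.intCast_zmod_eq_zero_iff_dvd] at h0
      have : (31:ℤ) ∣ 125 := dvd_trans h0 hr
      norm_num at this
    have hpl : ((p.leadingCoeff : ℤ) : K) ≠ 0 := hnz _ ⟨q.leadingCoeff, hlead.symm⟩
    have hql : ((q.leadingCoeff : ℤ) : K) ≠ 0 := hnz _ ⟨p.leadingCoeff, by rw [mul_comm]; exact hlead.symm⟩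
    have hmap : (X^6+6*X^4+8*X^2+8 : K[X]) = p.map (Int.castRingHom K) * q.map (Int.castRingHom K) := by
      rw [← Polynomial.map_mul, ← hpq, fZ_map_K]
    have hcase := Fb_irred.isUnit_or_isUnit hmap
    have conc : ∀ r s : ℤ[X], r ≠ 0 → fZ = r * s → ((r.leadingCoeff : ℤ) : K) ≠ 0 →
        IsUnit (r.map (Int.castRingHom K)) → IsUnit r := by
      intro r s hr0 hrs hrl hu
      have hd0 : (r.map (Int.castRingHom K)).natDegree = 0 := natDegree_eq_zero_of_isUnit hu
      have hdeq : (r.map (Int.castRingHom K)).natDegree = r.natDegree := by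
        apply natDegree_map_of_leadingCoeff_ne_zero
        simpa using hrl
      have hr_deg : r.natDegree = 0 := by omega
      have hC : r = C (r.coeff 0) := eq_C_of_natDegree_eq_zero hr_deg
      have : C (r.coeff 0) ∣ fZ := ⟨s, by rw [← hC]; exact hrs⟩
      have := fZ_prim _ this
      rw [hC]
      exact isUnit_C.mpr this
    rcases hcase with h | h
    · exact Or.inl (conc p q hp0 hpq hpl h)
    · exact Or.inr (conc q p hq0 (by rw [hpq]; ring) hql h)

lemma fZ_map_Q : fZ.map (Int.castRingHom ℚ) =
    (125 * X ^ 6 + 750 * X ^ 4 - 4332 * X ^ 2 + 1000 : ℚ[X]) := by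
  unfold fZ
  simp only [Polynomial.map_add, Polynomial.map_sub, Polynomial.map_mul, Polynomial.map_pow,
    map_C, map_X, eq_intCast, Polynomial.map_ofNat, Polynomial.map_intCast]
  push_cast
  ring

lemma fQ_irred : Irreducible (125 * X ^ 6 + 750 * X ^ 4 - 4332 * X ^ 2 + 1000 : ℚ[X]) := by
  rw [← fZ_map_Q]
  exact (Polynomial.IsPrimitive.Int.irreducible_iff_irreducible_map_cast fZ_prim).mp fZ_irred

/-- The polynomial `125z⁶ + 750z⁴ − 4332z² + 1000` is
irreducible over `ℚ` and has a real root `σ` in the interval `(0.49, 0.492)`. -/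
theorem bicubic_poly_irreducible_and_root :
    Irreducible (125 * X ^ 6 + 750 * X ^ 4 - 4332 * X ^ 2 + 1000 : ℚ[X]) ∧
    ∃ σ : ℝ, σ ∈ Set.Ioo (0.49 : ℝ) 0.492 ∧
      Polynomial.aeval σ
        (125 * X ^ 6 + 750 * X ^ 4 - 4332 * X ^ 2 + 1000 : ℚ[X]) = 0 := by
  refine ⟨fQ_irred, ?_⟩
  have hcont : ContinuousOn (fun x : ℝ => 125*x^6+750*x^4-4332*x^2+1000) (Set.Icc 0.49 0.492) := by
    fun_prop
  have key := intermediate_value_Ioo' (by norm_num : (0.49:ℝ) ≤ 0.492) hcont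
  have h0 : (0:ℝ) ∈ Set.Ioo (125*(0.492:ℝ)^6+750*0.492^4-4332*0.492^2+1000)
      (125*(0.49:ℝ)^6+750*0.49^4-4332*0.49^2+1000) := by
    constructor <;> norm_num
  obtain ⟨σ, hσ, hval⟩ := key h0
  refine ⟨σ, hσ, ?_⟩
  simp only [map_add, map_sub, map_mul, map_pow, map_ofNat, aeval_X]
  simpa using hval
end

section
/- Let f(z) = Σ aₙ zⁿ be a power series with non-negative real coefficients and finite positive radius of convergence r. Then z = r is a singularity of f, i.e., f has no analytic continuation to a neighbourhood of r (Pringsheim's theorem). -/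
/-!
Expanding `∑ aₙ (x + y)ⁿ` binomially gives a double series of non-negative terms when
`0 ≤ x` and `0 ≤ y`, so it may be summed in either order: the Taylor coefficients of `f` at a
point `x ∈ [0, r)` are `cₖ = ∑ₙ C(n,k) aₙ xⁿ⁻ᵏ ≥ 0`, and `∑ cₖ yᵏ` converges exactly when
`∑ aₙ (x + y)ⁿ` does. If `f` continued holomorphically to a disc around `r`, then for `x` close
to `r` that disc would contain the closed disc of radius `2 (r - x)` about `x`, so the Taylor
series at `x` would converge at some real `y` with `x + y > r`, and so would `∑ aₙ (x + y)ⁿ`.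
-/

open Metric Filter Topology FormalMultilinearSeries
open scoped NNReal ENNReal

section Recenter

variable {𝕜 : Type*} [RCLike 𝕜]

noncomputable def binomialTerm (a : ℕ → 𝕜) (x y : 𝕜) (nk : ℕ × ℕ) : 𝕜 :=
  (nk.1.choose nk.2 : 𝕜) * a nk.1 * x ^ (nk.1 - nk.2) * y ^ nk.2

/-- The coefficients of `y ↦ ∑ aₙ (x + y)ⁿ`; a junk `0` where the defining series diverges. -/
noncomputable def recenteredCoeff (a : ℕ → 𝕜) (x : 𝕜) (k : ℕ) : 𝕜 :=
  ∑' n, (n.choose k : 𝕜) * a n * x ^ (n - k)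

theorem hasSum_binomialTerm_row (a : ℕ → 𝕜) (x y : 𝕜) (n : ℕ) :
    HasSum (fun k => binomialTerm a x y (n, k)) (a n * (x + y) ^ n) := by
  have hfin : ∀ k ∉ Finset.range (n + 1), binomialTerm a x y (n, k) = 0 := fun k hk => by
    simp [binomialTerm, Nat.choose_eq_zero_of_lt (by simpa using hk : n < k)]
  have hrow : a n * (x + y) ^ n = ∑ k ∈ Finset.range (n + 1), binomialTerm a x y (n, k) := by
    rw [add_comm x y, add_pow, Finset.mul_sum]
    exact Finset.sum_congr rfl fun k _ => by simp only [binomialTerm]; ring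
  rw [hrow]
  exact hasSum_sum_of_ne_finset_zero hfin

theorem tsum_binomialTerm_col (a : ℕ → 𝕜) (x y : 𝕜) (k : ℕ) :
    ∑' n, binomialTerm a x y (n, k) = recenteredCoeff a x k * y ^ k := by
  simp only [binomialTerm]
  exact tsum_mul_right

theorem norm_binomialTerm (a : ℕ → 𝕜) (x y : 𝕜) (nk : ℕ × ℕ) :
    ‖binomialTerm a x y nk‖ = binomialTerm (fun n => ‖a n‖) ‖x‖ ‖y‖ nk := by
  simp only [binomialTerm, norm_mul, norm_pow, RCLike.norm_natCast]

theorem binomialTerm_nonneg {a : ℕ → ℝ} (ha : ∀ n, 0 ≤ a n) {x y : ℝ} (hx : 0 ≤ x)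
    (hy : 0 ≤ y) : 0 ≤ binomialTerm a x y := fun _ =>
  mul_nonneg (mul_nonneg (mul_nonneg (Nat.cast_nonneg _) (ha _)) (pow_nonneg hx _))
    (pow_nonneg hy _)

theorem summable_binomialTerm_of_nonneg {a : ℕ → ℝ} (ha : ∀ n, 0 ≤ a n) {x y : ℝ} (hx : 0 ≤ x)
    (hy : 0 ≤ y) (h : Summable fun n => a n * (x + y) ^ n) : Summable (binomialTerm a x y) :=
  (summable_prod_of_nonneg (binomialTerm_nonneg ha hx hy)).2
    ⟨fun n => (hasSum_binomialTerm_row a x y n).summable,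
     h.congr fun n => (hasSum_binomialTerm_row a x y n).tsum_eq.symm⟩

theorem summable_binomialTerm {a : ℕ → 𝕜} {x y : 𝕜}
    (h : Summable fun n => ‖a n‖ * (‖x‖ + ‖y‖) ^ n) : Summable (binomialTerm a x y) := by
  refine Summable.of_norm ?_
  simp only [norm_binomialTerm]
  exact summable_binomialTerm_of_nonneg (fun n => norm_nonneg _) (norm_nonneg x) (norm_nonneg y) h

theorem hasSum_recenteredCoeff_mul_pow {a : ℕ → 𝕜} {x y : 𝕜}
    (h : Summable fun n => ‖a n‖ * (‖x‖ + ‖y‖) ^ n) :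
    HasSum (fun k => recenteredCoeff a x k * y ^ k) (∑' n, a n * (x + y) ^ n) := by
  have hT := summable_binomialTerm h
  have hsum : ∑' nk, binomialTerm a x y nk = ∑' n, a n * (x + y) ^ n := by
    rw [hT.tsum_prod]
    exact tsum_congr fun n => (hasSum_binomialTerm_row a x y n).tsum_eq
  rw [← hsum]
  refine ((Equiv.prodComm ℕ ℕ).hasSum_iff.2 hT.hasSum).prod_fiberwise fun k => ?_
  rw [← tsum_binomialTerm_col]
  exact (hT.prod_symm.prod_factor k).hasSum

theorem summable_choose_mul_pow_sub {a : ℕ → ℝ} (ha : ∀ n, 0 ≤ a n) {x t : ℝ} (hx : 0 ≤ x)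
    (ht : 0 < t) (h : Summable fun n => a n * (x + t) ^ n) (k : ℕ) :
    Summable fun n => (n.choose k : ℝ) * a n * x ^ (n - k) :=
  (summable_mul_right_iff (pow_ne_zero k ht.ne')).1
    ((summable_binomialTerm_of_nonneg ha hx ht.le h).prod_symm.prod_factor k)

/-- Convergence at some `x + t` with `t > 0` makes every `recenteredCoeff a x k` a genuine sum
rather than a junk `0`. -/
theorem summable_of_summable_recenteredCoeff_mul_pow {a : ℕ → ℝ} (ha : ∀ n, 0 ≤ a n)
    {x t y : ℝ} (hx : 0 ≤ x) (ht : 0 < t) (hxt : Summable fun n => a n * (x + t) ^ n)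
    (hy : 0 ≤ y) (h : Summable fun k => recenteredCoeff a x k * y ^ k) :
    Summable fun n => a n * (x + y) ^ n := by
  have hT : Summable fun kn : ℕ × ℕ => binomialTerm a x y kn.swap :=
    (summable_prod_of_nonneg (f := fun kn => binomialTerm a x y kn.swap)
      fun kn => binomialTerm_nonneg ha hx hy kn.swap).2
      ⟨fun k => (summable_choose_mul_pow_sub ha hx ht hxt k).mul_right (y ^ k),
       h.congr fun k => (tsum_binomialTerm_col a x y k).symm⟩
  exact hT.prod_symm.prod.congr fun n => (hasSum_binomialTerm_row a x y n).tsum_eq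

end Recenter

theorem ofReal_recenteredCoeff (a : ℕ → ℝ) (x : ℝ) (k : ℕ) :
    ((recenteredCoeff a x k : ℝ) : ℂ) = recenteredCoeff (fun n => (a n : ℂ)) (x : ℂ) k := by
  rw [recenteredCoeff, Complex.ofReal_tsum]
  simp [recenteredCoeff]

theorem hasFPowerSeriesOnBall_ofScalars_of_hasSum {𝕜 : Type*} [RCLike 𝕜] {c : ℕ → 𝕜}
    {f : 𝕜 → 𝕜} {x : 𝕜} {R : ℝ≥0} (hR : 0 < R)
    (hf : ∀ y : 𝕜, ‖y‖ < R → HasSum (fun k => c k * y ^ k) (f (x + y))) :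
    HasFPowerSeriesOnBall f (ofScalars 𝕜 c) x R where
  r_le := by
    refine ENNReal.le_of_forall_nnreal_lt fun t ht =>
      (ofScalars 𝕜 c).le_radius_of_tendsto (l := 0) ?_
    have hsum := hf ((t : ℝ) : 𝕜) (by simpa using ht)
    simpa [ofScalars_norm] using hsum.summable.tendsto_atTop_zero.norm
  r_pos := by simpa using hR
  hasSum := fun {y} hy => by
    simpa only [ofScalars_apply_eq, smul_eq_mul] using hf y (by simpa using hy)

theorem hasFPowerSeriesOnBall_recenteredCoeff {𝕜 : Type*} [RCLike 𝕜] {a : ℕ → 𝕜} {x : 𝕜}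
    {R : ℝ≥0} (hR : 0 < R) (h : ∀ t : ℝ, 0 ≤ t → t < R → Summable fun n => ‖a n‖ * (‖x‖ + t) ^ n) :
    HasFPowerSeriesOnBall (fun z => ∑' n, a n * z ^ n) (ofScalars 𝕜 (recenteredCoeff a x)) x R :=
  hasFPowerSeriesOnBall_ofScalars_of_hasSum hR fun y hy =>
    hasSum_recenteredCoeff_mul_pow (h ‖y‖ (norm_nonneg y) hy)

theorem HasFPowerSeriesAt.hasFPowerSeriesOnBall_of_differentiableOn {E : Type*}
    [NormedAddCommGroup E] [NormedSpace ℂ E] [CompleteSpace E] {f g : ℂ → E}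
    {p : FormalMultilinearSeries ℂ ℂ E} {c : ℂ} {R : ℝ≥0} (hf : HasFPowerSeriesAt f p c)
    (hfg : f =ᶠ[𝓝 c] g) (hg : DifferentiableOn ℂ g (closedBall c R)) (hR : 0 < R) :
    HasFPowerSeriesOnBall g p c R := by
  have hgR := hg.hasFPowerSeriesOnBall hR
  rwa [← (hf.congr hfg).eq_formalMultilinearSeries hgR.hasFPowerSeriesAt] at hgR

/-- **Pringsheim's theorem.** Let `f(z) = ∑ aₙ zⁿ` be a power
series with non-negative real coefficients and finite positive radius of
convergence `r` (characterised by: the series converges absolutely at every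
real `x` with `0 ≤ x < r` and diverges at every real `x > r`).  Then `z = r`
is a singularity of `f`: there is no holomorphic function on an open disc
around `r` agreeing with `f` on the intersection with the disc of
convergence. -/
theorem pringsheim (a : ℕ → ℝ) (hpos : ∀ n, 0 ≤ a n)
    (r : ℝ) (hr : 0 < r)
    (hconv : ∀ x : ℝ, 0 ≤ x → x < r → Summable fun n => a n * x ^ n)
    (hdiv : ∀ x : ℝ, r < x → ¬ Summable fun n => a n * x ^ n) :
    ¬ ∃ ε : ℝ, 0 < ε ∧ ∃ g : ℂ → ℂ,
        DifferentiableOn ℂ g (Metric.ball (r : ℂ) ε) ∧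
        ∀ z ∈ Metric.ball (r : ℂ) ε ∩ Metric.ball (0 : ℂ) r,
          g z = ∑' n : ℕ, (a n : ℂ) * z ^ n := by
  rintro ⟨ε, hε, g, hg, hgF⟩
  obtain ⟨d, hd, hdr, hdε⟩ : ∃ d : ℝ, 0 < d ∧ d ≤ r ∧ 3 * d < ε :=
    ⟨min (ε / 4) r, by positivity, min_le_right _ _, by linarith [min_le_left (ε / 4) r]⟩
  lift d to ℝ≥0 using hd.le
  set x₀ : ℝ := r - d with hx₀_def
  have hx₀ : 0 ≤ x₀ := sub_nonneg.2 hdr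
  have hdist_r : dist (x₀ : ℂ) r = d := by
    simp [Complex.dist_eq, ← Complex.ofReal_sub, hx₀_def, abs_of_nonneg hd.le]
  have hdist_0 : dist (x₀ : ℂ) 0 = x₀ := by simp [abs_of_nonneg hx₀]
  have hF := hasFPowerSeriesOnBall_recenteredCoeff (a := fun n => (a n : ℂ)) (x := (x₀ : ℂ))
    (R := d) (mod_cast hd) fun t ht htd => by
      simpa [abs_of_nonneg (hpos _), abs_of_nonneg hx₀] using
        hconv (x₀ + t) (by positivity) (by linarith)
  have hFg : (fun z : ℂ => ∑' n, (a n : ℂ) * z ^ n) =ᶠ[𝓝 (x₀ : ℂ)] g :=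
    eventuallyEq_of_mem (ball_mem_nhds _ hd) fun z hz =>
      (hgF z ⟨ball_subset_ball' (by rw [hdist_r]; linarith) hz,
        ball_subset_ball' (by rw [hdist_0]; linarith) hz⟩).symm
  have hg' := hF.hasFPowerSeriesAt.hasFPowerSeriesOnBall_of_differentiableOn hFg
    (hg.mono (closedBall_subset_ball' (by push_cast; linarith) :
      closedBall (x₀ : ℂ) ((2 * d : ℝ≥0) : ℝ) ⊆ _)) (mul_pos two_pos (mod_cast hd))
  have hs := (hg'.hasSum (y := ((3 / 2 * d : ℝ) : ℂ))
    (by rw [eball_coe, mem_ball_zero_iff]; simp [abs_of_nonneg hd.le]; linarith)).summable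
  simp only [ofScalars_apply_eq, smul_eq_mul, ← ofReal_recenteredCoeff, ← Complex.ofReal_pow,
    ← Complex.ofReal_mul, Complex.summable_ofReal] at hs
  exact hdiv (x₀ + 3 / 2 * d) (by linarith) <|
    summable_of_summable_recenteredCoeff_mul_pow hpos hx₀ (half_pos hd)
      (hconv _ (by positivity) (by linarith)) (by positivity) hs
end
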